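/- arXiv:2305.10461 — 3 statements merged into one kernel-verified Lean document; each statement's English description precedes it below -/
import Mathlib

section
/- For positive definite n×n matrices X, Y, the congruence map Z ↦ C* Z C (for invertible C) applied to a weighted geometric mean satisfies: C*(X #_t Y)C = (C* X C) #_t (C* Y C) for all t ∈ [0,1]. -/
open Matrix
open scoped ComplexOrder

noncomputable def mrpow {n : ℕ} (A : Matrix (Fin n) (Fin n) ℂ) (t : ℝ) :
    Matrix (Fin n) (Fin n) ℂ :=
  if h : A.IsHermitian then
    (h.eigenvectorUnitary : Matrix (Fin n) (Fin n) ℂ) *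
      Matrix.diagonal (fun i => ((h.eigenvalues i ^ t : ℝ) : ℂ)) *
      star (h.eigenvectorUnitary : Matrix (Fin n) (Fin n) ℂ)
  else 0

/-- Weighted geometric mean `A #_t B = A^{1/2} (A^{-1/2} B A^{-1/2})^t A^{1/2}`. -/
noncomputable def gmean {n : ℕ} (t : ℝ) (A B : Matrix (Fin n) (Fin n) ℂ) :
    Matrix (Fin n) (Fin n) ℂ :=
  mrpow A (1/2) * mrpow (mrpow A (-(1/2)) * B * mrpow A (-(1/2))) t * mrpow A (1/2)

/-- `|X| = (XᴴX)^{1/2}`. -/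
noncomputable def matAbs {n : ℕ} (X : Matrix (Fin n) (Fin n) ℂ) : Matrix (Fin n) (Fin n) ℂ :=
  mrpow (Xᴴ * X) (1/2)

/-- the `j`-th largest singular value of `X` (0-indexed: `sVal X 0` is the largest). -/
noncomputable def sVal {n : ℕ} (X : Matrix (Fin n) (Fin n) ℂ) (j : Fin n) : ℝ :=
  Real.sqrt (((Matrix.isHermitian_conjTranspose_mul_self X).eigenvalues ∘
    Tuple.sort (Matrix.isHermitian_conjTranspose_mul_self X).eigenvalues) j.rev)

/-- The block `[[A, X],[Xᴴ, B]]` is PPT. -/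
def IsPPT {n : ℕ} (A X B : Matrix (Fin n) (Fin n) ℂ) : Prop :=
  (Matrix.fromBlocks A X Xᴴ B).PosSemidef ∧ (Matrix.fromBlocks A Xᴴ X B).PosSemidef

/-!
With `D = (Cᴴ X C)^{1/2}`, the matrix `U = X^{1/2} C D⁻¹` is unitary, being the polar factor of
`X^{1/2} C`. It satisfies `Cᴴ X^{1/2} = D Uᴴ`, `X^{1/2} C = U D` and
`Uᴴ (X^{-1/2} Y X^{-1/2}) U = D⁻¹ (Cᴴ Y C) D⁻¹`, and real powers commute with unitary
conjugation because conjugation is a continuous star-algebra automorphism, which commutes with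
the continuous functional calculus. Hence
`Cᴴ (X #_t Y) C = D Uᴴ (X^{-1/2} Y X^{-1/2})^t U D = D (D⁻¹ Cᴴ Y C D⁻¹)^t D`.
-/

section MatrixRpow

variable {n : ℕ}

lemma mrpow_eq_cfc {A : Matrix (Fin n) (Fin n) ℂ} (hA : A.IsHermitian) (t : ℝ) :
    mrpow A t = cfc (fun x : ℝ => x ^ t) A := by
  rw [hA.cfc_eq, mrpow, dif_pos hA]
  rfl

lemma isHermitian_mrpow (A : Matrix (Fin n) (Fin n) ℂ) (t : ℝ) : (mrpow A t).IsHermitian := by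
  by_cases hA : A.IsHermitian
  · rw [mrpow_eq_cfc hA]
    exact cfc_predicate _ A
  · rw [mrpow, dif_neg hA]
    exact isHermitian_zero

lemma mrpow_zero {A : Matrix (Fin n) (Fin n) ℂ} (hA : A.IsHermitian) : mrpow A 0 = 1 := by
  rw [mrpow_eq_cfc hA, cfc_congr (g := fun _ => 1) fun x _ => Real.rpow_zero x]
  exact cfc_const_one ℝ A

lemma mrpow_one {A : Matrix (Fin n) (Fin n) ℂ} (hA : A.IsHermitian) : mrpow A 1 = A := by
  rw [mrpow_eq_cfc hA, cfc_congr (g := id) fun x _ => Real.rpow_one x]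
  exact cfc_id ℝ A

lemma mrpow_add {A : Matrix (Fin n) (Fin n) ℂ} (hA : A.PosDef) (s t : ℝ) :
    mrpow A (s + t) = mrpow A s * mrpow A t := by
  have hcont (r : ℝ) : ContinuousOn (fun x : ℝ => x ^ r) (spectrum ℝ A) :=
    A.finite_real_spectrum.continuousOn _
  rw [mrpow_eq_cfc hA.isHermitian, mrpow_eq_cfc hA.isHermitian, mrpow_eq_cfc hA.isHermitian,
    ← cfc_mul _ _ A (hcont s) (hcont t)]
  refine cfc_congr fun x hx => Real.rpow_add ?_ s t
  rw [hA.isHermitian.spectrum_real_eq_range_eigenvalues] at hx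
  obtain ⟨i, rfl⟩ := hx
  exact hA.eigenvalues_pos i

lemma mrpow_half_mul_mrpow_half {A : Matrix (Fin n) (Fin n) ℂ} (hA : A.PosDef) :
    mrpow A (1/2) * mrpow A (1/2) = A := by
  rw [← mrpow_add hA]
  norm_num [mrpow_one hA.isHermitian]

lemma mrpow_half_mul_mrpow_neg_half {A : Matrix (Fin n) (Fin n) ℂ} (hA : A.PosDef) :
    mrpow A (1/2) * mrpow A (-(1/2)) = 1 := by
  rw [← mrpow_add hA]
  norm_num [mrpow_zero hA.isHermitian]

lemma mrpow_neg_half_mul_mrpow_half {A : Matrix (Fin n) (Fin n) ℂ} (hA : A.PosDef) :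
    mrpow A (-(1/2)) * mrpow A (1/2) = 1 := by
  rw [← mrpow_add hA]
  norm_num [mrpow_zero hA.isHermitian]

lemma mrpow_neg_half_mul_self_mul_mrpow_neg_half {A : Matrix (Fin n) (Fin n) ℂ}
    (hA : A.PosDef) : mrpow A (-(1/2)) * A * mrpow A (-(1/2)) = 1 := by
  nth_rw 2 [← mrpow_one hA.isHermitian]
  rw [← mrpow_add hA, ← mrpow_add hA]
  norm_num [mrpow_zero hA.isHermitian]

lemma mrpow_unitary_conj (A : Matrix (Fin n) (Fin n) ℂ) {U : Matrix (Fin n) (Fin n) ℂ}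
    (hU : U ∈ unitary (Matrix (Fin n) (Fin n) ℂ)) (t : ℝ) :
    mrpow (star U * A * U) t = star U * mrpow A t * U := by
  have hconj : ⇑(Unitary.conjStarAlgAut ℂ _ (star ⟨U, hU⟩)) = fun B => star U * B * U := by
    ext1 B; simp
  have hUA : (star U * A * U).IsHermitian ↔ A.IsHermitian := by
    simpa only [← isHermitian_iff_isSelfAdjoint]
      using (Unitary.isUnit_coe (U := ⟨U, hU⟩)).isSelfAdjoint_conjugate_iff'
  by_cases hA : A.IsHermitian
  · rw [mrpow_eq_cfc hA, mrpow_eq_cfc (hUA.mpr hA)]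
    simpa only [hconj] using
      (StarAlgHomClass.map_cfc (Unitary.conjStarAlgAut ℂ _ (star ⟨U, hU⟩))
        (fun x : ℝ => x ^ t) A (A.finite_real_spectrum.continuousOn _)
        (by rw [hconj]; fun_prop)).symm
  · rw [mrpow, mrpow, dif_neg hA, dif_neg (hUA.not.mpr hA)]
    simp

end MatrixRpow

section CongrUnitary

variable {n : ℕ}

/-- The unitary factor of the polar decomposition `X^{1/2} C = U (Cᴴ X C)^{1/2}`. -/
noncomputable def congrUnitary (X C : Matrix (Fin n) (Fin n) ℂ) : Matrix (Fin n) (Fin n) ℂ :=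
  mrpow X (1/2) * C * mrpow (Cᴴ * X * C) (-(1/2))

variable {X C : Matrix (Fin n) (Fin n) ℂ}

lemma star_congrUnitary :
    star (congrUnitary X C) = mrpow (Cᴴ * X * C) (-(1/2)) * Cᴴ * mrpow X (1/2) := by
  simp only [congrUnitary, star_mul, star_eq_conjTranspose, (isHermitian_mrpow _ _).eq,
    Matrix.mul_assoc]

variable (hX : X.PosDef)
include hX

lemma star_congrUnitary_mul_mul (Y : Matrix (Fin n) (Fin n) ℂ) :
    star (congrUnitary X C) * (mrpow X (-(1/2)) * Y * mrpow X (-(1/2))) * congrUnitary X C =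
      mrpow (Cᴴ * X * C) (-(1/2)) * (Cᴴ * Y * C) * mrpow (Cᴴ * X * C) (-(1/2)) := by
  rw [star_congrUnitary, congrUnitary]
  calc mrpow (Cᴴ * X * C) (-(1/2)) * Cᴴ * mrpow X (1/2) *
        (mrpow X (-(1/2)) * Y * mrpow X (-(1/2))) *
        (mrpow X (1/2) * C * mrpow (Cᴴ * X * C) (-(1/2)))
      = mrpow (Cᴴ * X * C) (-(1/2)) * Cᴴ * (mrpow X (1/2) * mrpow X (-(1/2))) * Y *
          (mrpow X (-(1/2)) * mrpow X (1/2)) * C * mrpow (Cᴴ * X * C) (-(1/2)) := by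
        simp only [Matrix.mul_assoc]
    _ = _ := by
        rw [mrpow_half_mul_mrpow_neg_half hX, mrpow_neg_half_mul_mrpow_half hX]
        simp only [Matrix.mul_one, Matrix.mul_assoc]

variable (hC : IsUnit C)
include hC

lemma congrUnitary_mul_mrpow_half :
    congrUnitary X C * mrpow (Cᴴ * X * C) (1/2) = mrpow X (1/2) * C := by
  rw [congrUnitary, Matrix.mul_assoc,
    mrpow_neg_half_mul_mrpow_half (hX.conjTranspose_mul_mul_same (mulVec_injective_of_isUnit hC)),
    Matrix.mul_one]

lemma mrpow_half_mul_star_congrUnitary :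
    mrpow (Cᴴ * X * C) (1/2) * star (congrUnitary X C) = Cᴴ * mrpow X (1/2) := by
  have h := congr_arg star (congrUnitary_mul_mrpow_half hX hC)
  simpa only [star_mul, star_eq_conjTranspose, (isHermitian_mrpow _ _).eq] using h

lemma congrUnitary_mem_unitary : congrUnitary X C ∈ unitary (Matrix (Fin n) (Fin n) ℂ) := by
  have hXC := hX.conjTranspose_mul_mul_same (mulVec_injective_of_isUnit hC)
  have h : star (congrUnitary X C) * congrUnitary X C = 1 := by
    rw [star_congrUnitary, congrUnitary]
    calc mrpow (Cᴴ * X * C) (-(1/2)) * Cᴴ * mrpow X (1/2) *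
          (mrpow X (1/2) * C * mrpow (Cᴴ * X * C) (-(1/2)))
        = mrpow (Cᴴ * X * C) (-(1/2)) * (Cᴴ * (mrpow X (1/2) * mrpow X (1/2)) * C) *
            mrpow (Cᴴ * X * C) (-(1/2)) := by simp only [Matrix.mul_assoc]
      _ = 1 := by
          rw [mrpow_half_mul_mrpow_half hX, mrpow_neg_half_mul_self_mul_mrpow_neg_half hXC]
  exact ⟨h, mul_eq_one_comm.mp h⟩

end CongrUnitary

theorem stmt_2_general {n : ℕ} (X Y C : Matrix (Fin n) (Fin n) ℂ)
    (hX : X.PosDef) (hC : IsUnit C)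
    (t : ℝ) :
    Cᴴ * gmean t X Y * C = gmean t (Cᴴ * X * C) (Cᴴ * Y * C) := by
  calc Cᴴ * gmean t X Y * C
      = (Cᴴ * mrpow X (1/2)) * mrpow (mrpow X (-(1/2)) * Y * mrpow X (-(1/2))) t *
          (mrpow X (1/2) * C) := by simp only [gmean, Matrix.mul_assoc]
    _ = mrpow (Cᴴ * X * C) (1/2) *
          (star (congrUnitary X C) * mrpow (mrpow X (-(1/2)) * Y * mrpow X (-(1/2))) t *
            congrUnitary X C) * mrpow (Cᴴ * X * C) (1/2) := by
          rw [← mrpow_half_mul_star_congrUnitary hX hC, ← congrUnitary_mul_mrpow_half hX hC]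
          simp only [Matrix.mul_assoc]
    _ = gmean t (Cᴴ * X * C) (Cᴴ * Y * C) := by
          rw [← mrpow_unitary_conj _ (congrUnitary_mem_unitary hX hC),
            star_congrUnitary_mul_mul hX, gmean]

theorem stmt_2 {n : ℕ} (X Y C : Matrix (Fin n) (Fin n) ℂ)
    (hX : X.PosDef) (hY : Y.PosDef) (hC : IsUnit C)
    (t : ℝ) (ht : t ∈ Set.Icc (0 : ℝ) 1) :
    Cᴴ * gmean t X Y * C = gmean t (Cᴴ * X * C) (Cᴴ * Y * C) :=
  stmt_2_general X Y C hX hC t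
end

section
/- If the block matrix [[A, X],[X*, B]] is PPT, then for j = 1,...,n, s_j(X) ≤ s_{⌊(j+1)/2⌋}((A+B)/2), where s_j are singular values arranged in decreasing order. -/
open Matrix
open scoped ComplexOrder

/-!
With `C = (A + B) / 2`, the two positivity conditions give
`2 Re ⟪u, X v⟫ ≤ Re ⟪u, C u⟫ + Re ⟪v, C v⟫` for all `u, v`. Hence if `v` and `X v` both lie in a
subspace `S` on which `‖C z‖ ≤ σ ‖z‖`, then `‖X v‖ ≤ σ ‖v‖`. With `k = ⌊j / 2⌋` (indices from `0`),
the span `S` of the eigenvectors of `CᴴC` with eigenvalue `≤ s_k(C)²` has dimension `≥ n - k`,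
so `S ∩ X⁻¹ S` has dimension `≥ n - 2k > n - (j + 1)` and meets the span of the eigenvectors of
`XᴴX` with eigenvalue `≥ s_j(X)²`, on which `‖X v‖ ≥ s_j(X) ‖v‖`.
-/

open scoped InnerProductSpace
open Module

namespace Submodule

variable {K V W : Type*} [DivisionRing K] [AddCommGroup V] [Module K V] [FiniteDimensional K V]

theorem finrank_add_finrank_le_finrank_inf_add (s t : Submodule K V) :
    finrank K s + finrank K t ≤ finrank K ↥(s ⊓ t) + finrank K V := by
  rw [← finrank_sup_add_finrank_inf_eq s t, add_comm (finrank K ↥(s ⊔ t))]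
  exact Nat.add_le_add_left (finrank_le _) _

theorem finrank_add_finrank_le_finrank_comap_add [AddCommGroup W] [Module K W]
    [FiniteDimensional K W] (f : V →ₗ[K] W) (p : Submodule K W) :
    finrank K p + finrank K V ≤ finrank K (p.comap f) + finrank K W := by
  have hker : p.comap f = LinearMap.ker (p.mkQ ∘ₗ f) := by
    rw [LinearMap.ker_comp, ker_mkQ]
  have hrank := LinearMap.finrank_range_add_finrank_ker (p.mkQ ∘ₗ f)
  have hrange := finrank_le (LinearMap.range (p.mkQ ∘ₗ f))
  have hquot := p.finrank_quotient_add_finrank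
  rw [hker]
  omega

theorem exists_mem_inf_inf_comap_ne_zero (f : V →ₗ[K] V) {s t : Submodule K V}
    (h : 2 * finrank K V < finrank K s + 2 * finrank K t) :
    ∃ v ∈ s ⊓ t ⊓ t.comap f, v ≠ 0 := by
  refine exists_mem_ne_zero_of_ne_bot fun hbot => ?_
  have hcomap := finrank_add_finrank_le_finrank_comap_add f t
  have hst := finrank_add_finrank_le_finrank_inf_add s t
  have hstt := finrank_add_finrank_le_finrank_inf_add (s ⊓ t) (t.comap f)
  rw [hbot, finrank_bot] at hstt
  omega

end Submodule

namespace Tuple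

open Finset

variable {α : Type*} [LinearOrder α] {n : ℕ}

theorem lt_card_filter_sort_rev_le (f : Fin n → α) (j : Fin n) :
    j.val < #{i | f (sort f j.rev) ≤ f i} := by
  have hmaps : ∀ i ∈ Finset.Ici j.rev, sort f i ∈ ({i | f (sort f j.rev) ≤ f i} : Finset _) :=
    fun i hi => Finset.mem_filter.2 ⟨Finset.mem_univ _, monotone_sort f (Finset.mem_Ici.1 hi)⟩
  have hcard := Finset.card_le_card_of_injOn _ hmaps (sort f).injective.injOn
  rw [Fin.card_Ici, Fin.val_rev] at hcard
  omega

theorem sub_le_card_filter_le_sort_rev (f : Fin n → α) (k : Fin n) :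
    n - k.val ≤ #{i | f i ≤ f (sort f k.rev)} := by
  have hmaps : ∀ i ∈ Finset.Iic k.rev, sort f i ∈ ({i | f i ≤ f (sort f k.rev)} : Finset _) :=
    fun i hi => Finset.mem_filter.2 ⟨Finset.mem_univ _, monotone_sort f (Finset.mem_Iic.1 hi)⟩
  have hcard := Finset.card_le_card_of_injOn _ hmaps (sort f).injective.injOn
  rw [Fin.card_Iic, Fin.val_rev] at hcard
  omega

end Tuple

theorem OrthonormalBasis.norm_sq_eq_sum_norm_repr_sq {𝕜 ι E : Type*} [RCLike 𝕜] [Fintype ι]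
    [NormedAddCommGroup E] [InnerProductSpace 𝕜 E] (b : OrthonormalBasis ι 𝕜 E) (v : E) :
    ‖v‖ ^ 2 = ∑ i, ‖b.repr v i‖ ^ 2 := by
  rw [← b.repr.norm_map v, EuclideanSpace.norm_sq_eq]

namespace Matrix.IsHermitian

open Finset

variable {𝕜 ι : Type*} [RCLike 𝕜] [Fintype ι] [DecidableEq ι] {A : Matrix ι ι 𝕜}

noncomputable def eigenvectorSpan (hA : A.IsHermitian) (s : Set ℝ) :
    Submodule 𝕜 (EuclideanSpace 𝕜 ι) :=
  Submodule.span 𝕜 (Set.range fun i : {i // hA.eigenvalues i ∈ s} => hA.eigenvectorBasis i)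

theorem finrank_eigenvectorSpan (hA : A.IsHermitian) (s : Set ℝ) [DecidablePred (· ∈ s)] :
    finrank 𝕜 (hA.eigenvectorSpan s) = #{i | hA.eigenvalues i ∈ s} := by
  rw [← Fintype.card_subtype]
  exact finrank_span_eq_card <|
    hA.eigenvectorBasis.orthonormal.linearIndependent.comp _ Subtype.val_injective

theorem repr_eq_zero_of_mem_eigenvectorSpan (hA : A.IsHermitian) {s : Set ℝ}
    {v : EuclideanSpace 𝕜 ι} (hv : v ∈ hA.eigenvectorSpan s) {i : ι}
    (hi : hA.eigenvalues i ∉ s) : hA.eigenvectorBasis.repr v i = 0 := by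
  have hle : hA.eigenvectorSpan s ≤ (𝕜 ∙ hA.eigenvectorBasis i)ᗮ := Submodule.span_le.2 <| by
    rintro _ ⟨k, rfl⟩
    exact Submodule.mem_orthogonal_singleton_iff_inner_right.2 <|
      hA.eigenvectorBasis.orthonormal.2 fun hik => hi (hik ▸ k.2)
  rw [OrthonormalBasis.repr_apply_apply]
  exact Submodule.mem_orthogonal_singleton_iff_inner_right.1 (hle hv)

theorem toEuclideanLin_eigenvectorBasis (hA : A.IsHermitian) (i : ι) :
    toEuclideanLin A (hA.eigenvectorBasis i) = (hA.eigenvalues i : 𝕜) • hA.eigenvectorBasis i := by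
  ext k
  exact (congrFun (hA.mulVec_eigenvectorBasis i) k).trans (RCLike.real_smul_eq_coe_mul _ _)

theorem repr_toEuclideanLin (hA : A.IsHermitian) (v : EuclideanSpace 𝕜 ι) (i : ι) :
    hA.eigenvectorBasis.repr (toEuclideanLin A v) i
      = hA.eigenvalues i * hA.eigenvectorBasis.repr v i := by
  rw [OrthonormalBasis.repr_apply_apply, OrthonormalBasis.repr_apply_apply,
    ← isSymmetric_toEuclideanLin_iff.2 hA, toEuclideanLin_eigenvectorBasis, inner_smul_left,
    RCLike.conj_ofReal]

theorem re_inner_toEuclideanLin_eq_sum (hA : A.IsHermitian) (v : EuclideanSpace 𝕜 ι) :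
    RCLike.re ⟪v, toEuclideanLin A v⟫_𝕜
      = ∑ i, hA.eigenvalues i * ‖hA.eigenvectorBasis.repr v i‖ ^ 2 := by
  rw [← hA.eigenvectorBasis.repr.inner_map_map, PiLp.inner_apply, map_sum]
  refine Finset.sum_congr rfl fun i _ => ?_
  rw [repr_toEuclideanLin, RCLike.inner_apply, mul_assoc, RCLike.mul_conj, ← RCLike.ofReal_pow,
    ← RCLike.ofReal_mul, RCLike.ofReal_re]

theorem re_inner_toEuclideanLin_le (hA : A.IsHermitian) {c : ℝ} {v : EuclideanSpace 𝕜 ι}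
    (hv : v ∈ hA.eigenvectorSpan (Set.Iic c)) :
    RCLike.re ⟪v, toEuclideanLin A v⟫_𝕜 ≤ c * ‖v‖ ^ 2 := by
  rw [re_inner_toEuclideanLin_eq_sum, hA.eigenvectorBasis.norm_sq_eq_sum_norm_repr_sq, mul_sum]
  refine sum_le_sum fun i _ => ?_
  by_cases hi : hA.eigenvalues i ∈ Set.Iic c
  · exact mul_le_mul_of_nonneg_right hi (by positivity)
  · simp [hA.repr_eq_zero_of_mem_eigenvectorSpan hv hi]

theorem le_re_inner_toEuclideanLin (hA : A.IsHermitian) {c : ℝ} {v : EuclideanSpace 𝕜 ι}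
    (hv : v ∈ hA.eigenvectorSpan (Set.Ici c)) :
    c * ‖v‖ ^ 2 ≤ RCLike.re ⟪v, toEuclideanLin A v⟫_𝕜 := by
  rw [re_inner_toEuclideanLin_eq_sum, hA.eigenvectorBasis.norm_sq_eq_sum_norm_repr_sq, mul_sum]
  refine sum_le_sum fun i _ => ?_
  by_cases hi : hA.eigenvalues i ∈ Set.Ici c
  · exact mul_le_mul_of_nonneg_right hi (by positivity)
  · simp [hA.repr_eq_zero_of_mem_eigenvectorSpan hv hi]

end Matrix.IsHermitian

namespace Matrix

variable {𝕜 m n : Type*} [RCLike 𝕜] [Fintype m] [Fintype n] [DecidableEq n]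

theorem inner_toEuclideanLin (M : Matrix m n 𝕜) (u : EuclideanSpace 𝕜 m)
    (v : EuclideanSpace 𝕜 n) :
    ⟪u, toEuclideanLin M v⟫_𝕜 = star (WithLp.ofLp u) ⬝ᵥ (M *ᵥ WithLp.ofLp v) :=
  dotProduct_comm _ _

theorem re_inner_toEuclideanLin_conjTranspose_mul_self (Y : Matrix m n 𝕜)
    (v : EuclideanSpace 𝕜 n) :
    RCLike.re ⟪v, toEuclideanLin (Yᴴ * Y) v⟫_𝕜 = ‖toEuclideanLin Y v‖ ^ 2 := by
  rw [← inner_self_eq_norm_sq (𝕜 := 𝕜), inner_toEuclideanLin, inner_toEuclideanLin,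
    ← mulVec_mulVec, dotProduct_mulVec, ← star_mulVec]
  rfl

theorem le_norm_toEuclideanLin_sq (Y : Matrix m n 𝕜) {c : ℝ} {v : EuclideanSpace 𝕜 n}
    (hv : v ∈ (isHermitian_conjTranspose_mul_self Y).eigenvectorSpan (Set.Ici c)) :
    c * ‖v‖ ^ 2 ≤ ‖toEuclideanLin Y v‖ ^ 2 :=
  re_inner_toEuclideanLin_conjTranspose_mul_self Y v ▸ IsHermitian.le_re_inner_toEuclideanLin _ hv

theorem norm_toEuclideanLin_le_sqrt_mul (Y : Matrix m n 𝕜) {c : ℝ} {v : EuclideanSpace 𝕜 n}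
    (hv : v ∈ (isHermitian_conjTranspose_mul_self Y).eigenvectorSpan (Set.Iic c)) :
    ‖toEuclideanLin Y v‖ ≤ √c * ‖v‖ := by
  have hsq := re_inner_toEuclideanLin_conjTranspose_mul_self Y v ▸
    IsHermitian.re_inner_toEuclideanLin_le _ hv
  rw [← Real.sqrt_sq (norm_nonneg _), ← Real.sqrt_sq (norm_nonneg v),
    ← Real.sqrt_mul' _ (sq_nonneg _)]
  exact Real.sqrt_le_sqrt hsq

theorem re_inner_toEuclideanLin_le_sqrt_mul (Y : Matrix n n 𝕜) {c : ℝ} {v : EuclideanSpace 𝕜 n}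
    (hv : v ∈ (isHermitian_conjTranspose_mul_self Y).eigenvectorSpan (Set.Iic c)) :
    RCLike.re ⟪v, toEuclideanLin Y v⟫_𝕜 ≤ √c * ‖v‖ ^ 2 :=
  calc RCLike.re ⟪v, toEuclideanLin Y v⟫_𝕜
      ≤ ‖v‖ * ‖toEuclideanLin Y v‖ := (RCLike.re_le_norm _).trans (norm_inner_le_norm _ _)
    _ ≤ ‖v‖ * (√c * ‖v‖) := by gcongr; exact norm_toEuclideanLin_le_sqrt_mul Y hv
    _ = √c * ‖v‖ ^ 2 := by ring

end Matrix

theorem norm_le_of_two_mul_re_inner_le {𝕜 E : Type*} [RCLike 𝕜] [NormedAddCommGroup E]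
    [InnerProductSpace 𝕜 E] {f : E →ₗ[𝕜] E} {S : Submodule 𝕜 E} {γ : ℝ} (hγ : 0 ≤ γ)
    (h : ∀ u ∈ S, ∀ w ∈ S, 2 * RCLike.re ⟪u, f w⟫_𝕜 ≤ γ * (‖u‖ ^ 2 + ‖w‖ ^ 2))
    {v : E} (hv : v ∈ S) (hfv : f v ∈ S) : ‖f v‖ ≤ γ * ‖v‖ := by
  rcases eq_or_ne (f v) 0 with hzero | hne
  · rw [hzero, norm_zero]
    positivity
  have hv_pos : 0 < ‖v‖ := norm_pos_iff.2 fun h0 => hne (h0 ▸ map_zero f)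
  have hfv_pos : 0 < ‖f v‖ := norm_pos_iff.2 hne
  -- test `h` against `u = (‖v‖ / ‖f v‖) • f v`, which has the same norm as `v`
  set t : ℝ := ‖v‖ / ‖f v‖
  have key := h ((t : 𝕜) • f v) (S.smul_mem _ hfv) v hv
  have hnorm : ‖(t : 𝕜) • f v‖ = ‖v‖ := by
    rw [norm_smul, RCLike.norm_ofReal, abs_of_nonneg (by positivity), div_mul_cancel₀ _ hfv_pos.ne']
  have hinner : RCLike.re ⟪(t : 𝕜) • f v, f v⟫_𝕜 = ‖v‖ * ‖f v‖ := by
    rw [inner_smul_left, RCLike.conj_ofReal, inner_self_eq_norm_sq_to_K, ← RCLike.ofReal_pow,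
      ← RCLike.ofReal_mul, RCLike.ofReal_re, pow_two, ← mul_assoc, div_mul_cancel₀ _ hfv_pos.ne']
  rw [hnorm, hinner] at key
  nlinarith

namespace Matrix

variable {𝕜 m n : Type*} [RCLike 𝕜] [Fintype m] [Fintype n]

theorem star_dotProduct_conjTranspose_mulVec (X : Matrix m n 𝕜) (u : m → 𝕜) (v : n → 𝕜) :
    star v ⬝ᵥ (Xᴴ *ᵥ u) = star (star u ⬝ᵥ (X *ᵥ v)) := by
  rw [star_dotProduct, star_mulVec, conjTranspose_conjTranspose, dotProduct_mulVec]

theorem PosSemidef.two_mul_re_dotProduct_le {A : Matrix m m 𝕜} {B : Matrix n n 𝕜} {X : Matrix m n 𝕜}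
    (h : (fromBlocks A X Xᴴ B).PosSemidef) (u : m → 𝕜) (v : n → 𝕜) :
    2 * RCLike.re (star u ⬝ᵥ (X *ᵥ v))
      ≤ RCLike.re (star u ⬝ᵥ (A *ᵥ u)) + RCLike.re (star v ⬝ᵥ (B *ᵥ v)) := by
  have hnonneg := RCLike.nonneg_iff.1 (h.dotProduct_mulVec_nonneg (Sum.elim u (-v))) |>.1
  rw [Function.star_sumElim, fromBlocks_mulVec, sumElim_dotProduct_sumElim] at hnonneg
  simp only [Sum.elim_comp_inl, Sum.elim_comp_inr, mulVec_neg, dotProduct_add, dotProduct_neg,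
    neg_dotProduct, star_neg, neg_neg, star_dotProduct_conjTranspose_mulVec, map_add, map_neg,
    RCLike.star_def, RCLike.conj_re] at hnonneg
  linarith

end Matrix

theorem IsPPT.two_mul_re_inner_le {n : ℕ} {A B X : Matrix (Fin n) (Fin n) ℂ} (h : IsPPT A X B)
    (u v : EuclideanSpace ℂ (Fin n)) :
    2 * RCLike.re ⟪u, toEuclideanLin X v⟫_ℂ
      ≤ RCLike.re ⟪u, toEuclideanLin ((1 / 2 : ℂ) • (A + B)) u⟫_ℂ
        + RCLike.re ⟪v, toEuclideanLin ((1 / 2 : ℂ) • (A + B)) v⟫_ℂ := by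
  have h₁ := h.1.two_mul_re_dotProduct_le (WithLp.ofLp u) (WithLp.ofLp v)
  have h₂ : (fromBlocks A Xᴴ Xᴴᴴ B).PosSemidef := by rw [conjTranspose_conjTranspose]; exact h.2
  replace h₂ := h₂.two_mul_re_dotProduct_le (WithLp.ofLp v) (WithLp.ofLp u)
  rw [star_dotProduct_conjTranspose_mulVec] at h₂
  simp only [inner_toEuclideanLin, smul_mulVec, add_mulVec, dotProduct_smul, dotProduct_add,
    smul_eq_mul, Complex.mul_re, Complex.add_re, RCLike.star_def, RCLike.conj_re,
    RCLike.re_to_complex] at h₁ h₂ ⊢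
  norm_num
  linarith

theorem IsPPT.two_mul_re_inner_le_sqrt_mul {n : ℕ} {A B X : Matrix (Fin n) (Fin n) ℂ}
    (h : IsPPT A X B) {c : ℝ} {u v : EuclideanSpace ℂ (Fin n)}
    (hu : u ∈ (isHermitian_conjTranspose_mul_self ((1 / 2 : ℂ) • (A + B))).eigenvectorSpan
      (Set.Iic c))
    (hv : v ∈ (isHermitian_conjTranspose_mul_self ((1 / 2 : ℂ) • (A + B))).eigenvectorSpan
      (Set.Iic c)) :
    2 * RCLike.re ⟪u, toEuclideanLin X v⟫_ℂ ≤ √c * (‖u‖ ^ 2 + ‖v‖ ^ 2) := by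
  have hCu := re_inner_toEuclideanLin_le_sqrt_mul _ hu
  have hCv := re_inner_toEuclideanLin_le_sqrt_mul _ hv
  linarith [h.two_mul_re_inner_le u v]

theorem stmt_8 {n : ℕ} (A B X : Matrix (Fin n) (Fin n) ℂ)
    (hPPT : IsPPT A X B) (j : Fin n) :
    sVal X j ≤ sVal ((1/2 : ℂ) • (A + B))
      ⟨j.val / 2, lt_of_le_of_lt (Nat.div_le_self _ _) j.isLt⟩ := by
  set C : Matrix (Fin n) (Fin n) ℂ := (1/2 : ℂ) • (A + B)
  have hX := isHermitian_conjTranspose_mul_self X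
  have hC := isHermitian_conjTranspose_mul_self C
  set k : Fin n := ⟨j.val / 2, lt_of_le_of_lt (Nat.div_le_self _ _) j.isLt⟩
  set α := hX.eigenvalues (Tuple.sort hX.eigenvalues j.rev)
  set β := hC.eigenvalues (Tuple.sort hC.eigenvalues k.rev)
  change √α ≤ √β
  set T := hX.eigenvectorSpan (Set.Ici α)
  set S := hC.eigenvectorSpan (Set.Iic β)
  have hT : j.val < finrank ℂ T := by
    simpa [T, IsHermitian.finrank_eigenvectorSpan] using
      Tuple.lt_card_filter_sort_rev_le hX.eigenvalues j
  have hS : n - k.val ≤ finrank ℂ S := by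
    simpa [S, IsHermitian.finrank_eigenvectorSpan] using
      Tuple.sub_le_card_filter_le_sort_rev hC.eigenvalues k
  obtain ⟨v, ⟨⟨hvT, hvS⟩, hXvS⟩, hv0⟩ :=
    Submodule.exists_mem_inf_inf_comap_ne_zero (toEuclideanLin X) (s := T) (t := S) <| by
      have hk : 2 * k.val ≤ j.val := Nat.mul_div_le _ _
      rw [finrank_euclideanSpace_fin]
      omega
  have hlow := le_norm_toEuclideanLin_sq X hvT
  have hup := norm_le_of_two_mul_re_inner_le (Real.sqrt_nonneg β)
    (fun u hu w hw => hPPT.two_mul_re_inner_le_sqrt_mul hu hw) hvS hXvS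
  have hαβ : α ≤ √β ^ 2 := by
    refine le_of_mul_le_mul_right (hlow.trans ?_) (by positivity : 0 < ‖v‖ ^ 2)
    rw [← mul_pow]
    gcongr
  calc √α ≤ √(√β ^ 2) := Real.sqrt_le_sqrt hαβ
    _ = √β := Real.sqrt_sq (Real.sqrt_nonneg β)
end

section
/- If H = [[A, X],[X*, B]] is positive semidefinite and X = U|X| is the polar decomposition of X with U unitary, then [[U*AU, |X|],[|X|, B]] is PPT. -/
open Matrix
open scoped ComplexOrder

/-! Conjugating `H` by `diag(U, 1)` replaces the off-diagonal block `X` by `UᴴX = |X|`. Since `|X|`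
is Hermitian, the partial transpose of the resulting block matrix is the matrix itself. -/

theorem mrpow_isHermitian {n : ℕ} (A : Matrix (Fin n) (Fin n) ℂ) (t : ℝ) :
    (mrpow A t).IsHermitian := by
  unfold mrpow
  split
  · simp [IsHermitian, conjTranspose_mul, diagonal_conjTranspose, Matrix.mul_assoc,
      star_eq_conjTranspose, Pi.star_def, Complex.conj_ofReal]
  · exact isHermitian_zero

theorem matAbs_isHermitian {n : ℕ} (X : Matrix (Fin n) (Fin n) ℂ) : (matAbs X).IsHermitian :=
  mrpow_isHermitian _ _

namespace Matrix

variable {m n R : Type*} [Fintype m] [Fintype n] [Ring R] [PartialOrder R] [StarRing R]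

theorem PosSemidef.fromBlocks_congr {A : Matrix m m R} {B : Matrix n n R} {X : Matrix m n R}
    (h : (fromBlocks A X Xᴴ B).PosSemidef) (U : Matrix m m R) (V : Matrix n n R) :
    (fromBlocks (Uᴴ * A * U) (Uᴴ * X * V) (Vᴴ * Xᴴ * U) (Vᴴ * B * V)).PosSemidef := by
  simpa only [fromBlocks_conjTranspose, fromBlocks_multiply, conjTranspose_zero, Matrix.mul_zero,
    Matrix.zero_mul, add_zero, zero_add, Matrix.mul_assoc] using
    h.conjTranspose_mul_mul_same (fromBlocks U 0 0 V)

end Matrix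

theorem isPPT_of_isHermitian {n : ℕ} {A X B : Matrix (Fin n) (Fin n) ℂ} (hX : X.IsHermitian)
    (h : (fromBlocks A X X B).PosSemidef) : IsPPT A X B := by
  rw [IsPPT, hX.eq]
  exact ⟨h, h⟩

theorem stmt_11 {n : ℕ} (A B X : Matrix (Fin n) (Fin n) ℂ)
    (hH : (Matrix.fromBlocks A X Xᴴ B).PosSemidef)
    (U : Matrix (Fin n) (Fin n) ℂ) (hU : U ∈ Matrix.unitaryGroup (Fin n) ℂ)
    (hpolar : X = U * matAbs X) :
    IsPPT (Uᴴ * A * U) (matAbs X) B := by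
  have hUX : Uᴴ * X = matAbs X := by
    conv_lhs => rw [hpolar, ← Matrix.mul_assoc, ← star_eq_conjTranspose,
      mem_unitaryGroup_iff'.mp hU, Matrix.one_mul]
  have hXU : Xᴴ * U = matAbs X := by
    rw [← (matAbs_isHermitian X).eq, ← hUX, conjTranspose_mul, conjTranspose_conjTranspose]
  apply isPPT_of_isHermitian (matAbs_isHermitian X)
  simpa only [conjTranspose_one, Matrix.mul_one, Matrix.one_mul, hUX, hXU] using
    hH.fromBlocks_congr U 1
end
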